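/- (Theorem 4.3: convergence of the two-dimensional implicit scheme, 0 < γ < 1.) Let γ ∈ (0,1), α, β ∈ (1,2], integers N_x, N_y ≥ 2 and N_t ≥ 1, reals τ, Δx, Δy > 0, nonnegative reals c_{i,j,k}, d_{i,j,k} (1 ≤ i ≤ N_x-1, 1 ≤ j ≤ N_y-1, 1 ≤ k ≤ N_t), and set ω'_{i,j,k} = -Γ(2-γ)·τ^γ·κ_α·c_{i,j,k}/(Γ(4-α)·(Δx)^α) ≥ 0, ω''_{i,j,k} = -Γ(2-γ)·τ^γ·κ_β·d_{i,j,k}/(Γ(4-β)·(Δy)^β) ≥ 0. Let R^k_{i,j} be reals with R_max = max_{i,j,k} |R^k_{i,j}|. Suppose real numbers ε^k_{i,j} satisfy ε^0_{i,j} = 0 for all i, j; ε^k_{i,j} = 0 whenever i ∈ {0, N_x} or j ∈ {0, N_y} and 1 ≤ k ≤ N_t; and for all interior (i,j) and 0 ≤ k ≤ N_t - 1: (1 - ω'_{i,j,k+1}·g^{α,N_x}_{i,i} - ω''_{i,j,k+1}·g^{β,N_y}_{j,j})·ε^{k+1}_{i,j} - ω'_{i,j,k+1}·Σ_{m=0,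 m≠i}^{N_x} g^{α,N_x}_{i,m}·ε^{k+1}_{m,j} - ω''_{i,j,k+1}·Σ_{m=0, m≠j}^{N_y} g^{β,N_y}_{j,m}·ε^{k+1}_{i,m} = Σ_{s=0}^{k-1}(l_s - l_{s+1})·ε^{k-s}_{i,j} + R^{k+1}_{i,j}. Then for every 1 ≤ k ≤ N_t: max_{i,j} |ε^k_{i,j}| ≤ R_max / l_{k-1} ≤ (k^γ/(1-γ))·R_max. In particular, if T > 0, N_t·τ ≤ T and |R^k_{i,j}| ≤ C·τ^γ·(τ^{2-γ} + (Δx)^2 + (Δy)^2) for all i, j, k, then max_{i,j} |ε^k_{i,j}| ≤ (C·T^γ/(1-γ))·(τ^{2-γ} + (Δx)^2 + (Δy)^2) for all k. -/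

import Mathlib

/-- The coefficients `a^ν_{j,m}` of the second-order discretization of the left
Riemann–Liouville fractional derivative. All powers are real powers. -/
noncomputable def aCoef (ν : ℝ) (j m : ℕ) : ℝ :=
  if m = j then 1
  else if m = 0 then ((j : ℝ) - 1) ^ (3 - ν) - (j : ℝ) ^ (2 - ν) * ((j : ℝ) - 3 + ν)
  else ((j : ℝ) - (m : ℝ) + 1) ^ (3 - ν) - 2 * ((j : ℝ) - (m : ℝ)) ^ (3 - ν)
    + ((j : ℝ) - (m : ℝ) - 1) ^ (3 - ν)

/-- The coefficients `b^ν_{j,m}` of the second-order discretization of the right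
Riemann–Liouville fractional derivative on a grid with `N` subintervals. -/
noncomputable def bCoef (ν : ℝ) (N j m : ℕ) : ℝ :=
  if m = j then 1
  else if m = N then (3 - ν - (N : ℝ) + (j : ℝ)) * ((N : ℝ) - (j : ℝ)) ^ (2 - ν)
    + ((N : ℝ) - (j : ℝ) - 1) ^ (3 - ν)
  else ((m : ℝ) - (j : ℝ) + 1) ^ (3 - ν) - 2 * ((m : ℝ) - (j : ℝ)) ^ (3 - ν)
    + ((m : ℝ) - (j : ℝ) - 1) ^ (3 - ν)

/-- The coefficients `p^ν_{i,m}` (left-derivative part), for `1 ≤ i ≤ N-1`. -/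
noncomputable def pCoef (ν : ℝ) (i m : ℕ) : ℝ :=
  if m < i then aCoef ν (i - 1) m - 2 * aCoef ν i m + aCoef ν (i + 1) m
  else if m = i then -2 * aCoef ν i i + aCoef ν (i + 1) i
  else if m = i + 1 then aCoef ν (i + 1) (i + 1)
  else 0

/-- The coefficients `q^ν_{i,m}` (right-derivative part), for `1 ≤ i ≤ N-1`. -/
noncomputable def qCoef (ν : ℝ) (N i m : ℕ) : ℝ :=
  if m + 1 < i then 0
  else if m + 1 = i then bCoef ν N (i - 1) (i - 1)
  else if m = i then -2 * bCoef ν N i i + bCoef ν N (i - 1) i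
  else bCoef ν N (i - 1) m - 2 * bCoef ν N i m + bCoef ν N (i + 1) m

/-- The Riesz-derivative difference coefficients `g^{ν,N}_{i,m} = p^ν_{i,m} + q^ν_{i,m}`. -/
noncomputable def gCoef (ν : ℝ) (N i m : ℕ) : ℝ := pCoef ν i m + qCoef ν N i m

/-- The L1 coefficients `l_s = (s+1)^(1-γ) - s^(1-γ)` of the Caputo discretization. -/
noncomputable def lCoef (γ : ℝ) (s : ℕ) : ℝ := ((s : ℝ) + 1) ^ (1 - γ) - (s : ℝ) ^ (1 - γ)

/-- The Riesz constant `κ_ν = 1 / (2 cos(νπ/2))`. -/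
noncomputable def kappa (ν : ℝ) : ℝ := 1 / (2 * Real.cos (ν * Real.pi / 2))

/-- The maximum of `|v i|` over `0 ≤ i ≤ N`. -/
noncomputable def maxAbs (N : ℕ) (v : ℕ → ℝ) : ℝ :=
  (Finset.range (N + 1)).sup' Finset.nonempty_range_add_one fun i => |v i|

/-- The maximum of `|v i j|` over `0 ≤ i ≤ Nx`, `0 ≤ j ≤ Ny`. -/
noncomputable def maxAbs2 (Nx Ny : ℕ) (v : ℕ → ℕ → ℝ) : ℝ :=
  ((Finset.range (Nx + 1)) ×ˢ (Finset.range (Ny + 1))).sup'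
    (Finset.nonempty_range_add_one.product Finset.nonempty_range_add_one) fun p => |v p.1 p.2|

/-!
The error obeys a discrete maximum principle. For `1 ≤ ν ≤ 2` the Riesz coefficients `g^{ν,N}`
restricted to the interior nodes have a nonpositive diagonal, nonnegative off-diagonal entries and
nonpositive row sums: this comes from the convexity and monotonicity of the second difference of
`x ^ (3 - ν)` on `[1, ∞)`, the right-derivative coefficients being the left ones read backwards
from `N`, plus the inequality `3 ^ q - 4 * 2 ^ q + 7 ≥ 0` on `[1, 2]` for the two neighbours of
the diagonal. Since `κ_ν < 0` the weights `ω', ω''` are nonnegative, so evaluating the scheme at a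
node where `|ε^{k+1}|` is maximal gives
`‖ε^{k+1}‖ ≤ ∑ s < k, (l_s - l_{s+1}) ‖ε^{k-s}‖ + R_max`.
As `l` is positive and decreasing with `l_0 = 1`, strong induction turns this into
`‖ε^{k+1}‖ ≤ R_max / l_k`, and weighted AM-GM gives `k ^ γ * l_{k-1} ≥ 1 - γ`.
-/

open Real Set

lemma sum_Icc_one_reflect {M : Type*} [AddCommMonoid M] (f : ℕ → M) (n : ℕ) :
    ∑ m ∈ Finset.Icc 1 n, f (n + 1 - m) = ∑ m ∈ Finset.Icc 1 n, f m :=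
  Finset.sum_nbij' (fun m ↦ n + 1 - m) (fun m ↦ n + 1 - m) (by simp; omega) (by simp; omega)
    (by simp; omega) (by simp; omega) fun _ _ ↦ rfl

lemma abs_sum_mul_le_sum_mul {ι : Type*} {s : Finset ι} {w x y : ι → ℝ}
    (hw : ∀ i ∈ s, 0 ≤ w i) (hxy : ∀ i ∈ s, |x i| ≤ y i) :
    |∑ i ∈ s, w i * x i| ≤ ∑ i ∈ s, w i * y i :=
  (Finset.abs_sum_le_sum_abs _ _).trans <| Finset.sum_le_sum fun i hi ↦ by
    rw [abs_mul, abs_of_nonneg (hw i hi)]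
    exact mul_le_mul_of_nonneg_left (hxy i hi) (hw i hi)

section SecondDifference

def secondDiff (f : ℝ → ℝ) (x : ℝ) : ℝ := f (x + 1) - 2 * f x + f (x - 1)

lemma ConvexOn.secondDiff_nonneg {s : Set ℝ} {f : ℝ → ℝ} (hf : ConvexOn ℝ s f) {x : ℝ}
    (hl : x - 1 ∈ s) (hr : x + 1 ∈ s) : 0 ≤ secondDiff f x := by
  have h := hf.2 hl hr (by norm_num : (0 : ℝ) ≤ 1 / 2) (by norm_num : (0 : ℝ) ≤ 1 / 2) (by norm_num)
  rw [show (1 / 2 : ℝ) • (x - 1) + (1 / 2 : ℝ) • (x + 1) = x by simp only [smul_eq_mul]; ring,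
    smul_eq_mul, smul_eq_mul] at h
  unfold secondDiff
  linarith

lemma ConcaveOn.secondDiff_nonpos {s : Set ℝ} {f : ℝ → ℝ} (hf : ConcaveOn ℝ s f) {x : ℝ}
    (hl : x - 1 ∈ s) (hr : x + 1 ∈ s) : secondDiff f x ≤ 0 := by
  have h := hf.neg.secondDiff_nonneg hl hr
  unfold secondDiff at h ⊢
  simp only [Pi.neg_apply] at h
  linarith

lemma hasDerivAt_secondDiff {f f' : ℝ → ℝ} {x : ℝ}
    (hf : ∀ y ∈ ({x - 1, x, x + 1} : Set ℝ), HasDerivAt f (f' y) y) :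
    HasDerivAt (secondDiff f) (secondDiff f' x) x :=
  (((hf _ (by simp)).comp_add_const x 1).sub (((hf _ (by simp)).const_mul 2))).add
    ((hf _ (by simp)).comp_sub_const x 1)

lemma convexOn_rpow_of_nonpos {p : ℝ} (hp : p ≤ 0) :
    ConvexOn ℝ (Ioi 0) fun x : ℝ ↦ x ^ p := by
  refine convexOn_of_hasDerivWithinAt2_nonneg (f' := fun x ↦ p * x ^ (p - 1))
    (f'' := fun x ↦ p * ((p - 1) * x ^ (p - 1 - 1))) (convex_Ioi 0)
    (fun x hx ↦ (continuousAt_rpow_const x p (Or.inl hx.ne')).continuousWithinAt) ?_ ?_ ?_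
    <;> intro x hx <;> simp only [interior_Ioi, mem_Ioi] at hx ⊢
  · exact (hasDerivAt_rpow_const (Or.inl hx.ne')).hasDerivWithinAt
  · exact ((hasDerivAt_rpow_const (Or.inl hx.ne')).const_mul p).hasDerivWithinAt
  · have : 0 < x ^ (p - 1 - 1) := rpow_pos_of_pos hx _
    rw [← mul_assoc]
    exact mul_nonneg (by nlinarith) this.le

variable {q : ℝ}

lemma continuous_secondDiff_rpow (hq : 0 ≤ q) : Continuous (secondDiff (· ^ q)) := by
  unfold secondDiff
  have := continuous_rpow_const hq
  fun_prop

lemma hasDerivAt_secondDiff_rpow {x : ℝ} (hx : 1 < x) :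
    HasDerivAt (secondDiff (· ^ q)) (secondDiff (fun y ↦ q * y ^ (q - 1)) x) x :=
  hasDerivAt_secondDiff fun y hy ↦ hasDerivAt_rpow_const (Or.inl (by
    rcases hy with rfl | rfl | rfl <;> linarith))

lemma convexOn_secondDiff_rpow (hq₁ : 1 ≤ q) (hq₂ : q ≤ 2) :
    ConvexOn ℝ (Ici 1) (secondDiff (· ^ q)) := by
  refine convexOn_of_hasDerivWithinAt2_nonneg (convex_Ici 1)
    (continuous_secondDiff_rpow (by linarith)).continuousOn
    (f' := secondDiff fun y ↦ q * y ^ (q - 1))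
    (f'' := secondDiff fun y ↦ q * ((q - 1) * y ^ (q - 1 - 1))) ?_ ?_ ?_
    <;> intro x hx <;> simp only [interior_Ici, mem_Ioi] at hx ⊢
  · exact (hasDerivAt_secondDiff_rpow hx).hasDerivWithinAt
  · refine (hasDerivAt_secondDiff fun y hy ↦ ?_).hasDerivWithinAt
    have hy₀ : y ≠ 0 := by rcases hy with rfl | rfl | rfl <;> linarith
    exact (hasDerivAt_rpow_const (Or.inl hy₀)).const_mul q
  · have hconv : ConvexOn ℝ (Ioi 0) fun y : ℝ ↦ q * ((q - 1) * y ^ (q - 1 - 1)) := by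
      simpa only [smul_eq_mul, mul_assoc] using
        (convexOn_rpow_of_nonpos (p := q - 1 - 1) (by linarith)).smul
          (mul_nonneg (by linarith : (0 : ℝ) ≤ q) (by linarith : (0 : ℝ) ≤ q - 1))
    exact hconv.secondDiff_nonneg (mem_Ioi.2 (by linarith)) (mem_Ioi.2 (by linarith))

lemma antitoneOn_secondDiff_rpow (hq₁ : 1 ≤ q) (hq₂ : q ≤ 2) :
    AntitoneOn (secondDiff (· ^ q)) (Ici 1) := by
  refine antitoneOn_of_hasDerivWithinAt_nonpos (convex_Ici 1)
    (continuous_secondDiff_rpow (by linarith)).continuousOn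
    (f' := secondDiff fun y ↦ q * y ^ (q - 1)) ?_ ?_
    <;> intro x hx <;> simp only [interior_Ici, mem_Ioi] at hx ⊢
  · exact (hasDerivAt_secondDiff_rpow hx).hasDerivWithinAt
  · have hconc : ConcaveOn ℝ (Ici 0) fun y : ℝ ↦ q * y ^ (q - 1) := by
      simpa only [smul_eq_mul] using
        (concaveOn_rpow (p := q - 1) (by linarith) (by linarith)).smul (by linarith : (0 : ℝ) ≤ q)
    exact hconc.secondDiff_nonpos (mem_Ici.2 (by linarith)) (mem_Ici.2 (by linarith))

lemma secondDiff_rpow_one (hq : q ≠ 0) : secondDiff (· ^ q) 1 = 2 ^ q - 2 := by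
  norm_num [secondDiff, zero_rpow hq]

lemma secondDiff_rpow_two : secondDiff (· ^ q) 2 = 3 ^ q - 2 * 2 ^ q + 1 := by
  norm_num [secondDiff]

lemma sum_secondDiff_rpow_Icc (hq : q ≠ 0) (n : ℕ) :
    ∑ r ∈ Finset.Icc 1 n, secondDiff (· ^ q) (r : ℝ) = ((n : ℝ) + 1) ^ q - (n : ℝ) ^ q - 1 := by
  induction n with
  | zero => simp [zero_rpow hq]
  | succ n ih =>
    rw [Finset.sum_Icc_succ_top (by omega), ih, secondDiff]
    push_cast
    rw [add_sub_cancel_right]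
    ring

lemma three_rpow_sub_four_mul_two_rpow_add_seven_nonneg (hq₁ : 1 ≤ q) (hq₂ : q ≤ 2) :
    0 ≤ (3 : ℝ) ^ q - 4 * 2 ^ q + 7 := by
  have hderiv (p : ℝ) : HasDerivAt (fun p : ℝ ↦ (3 : ℝ) ^ p - 4 * 2 ^ p)
      (3 ^ p * log 3 - 4 * (2 ^ p * log 2)) p :=
    (hasStrictDerivAt_const_rpow (by norm_num) p).hasDerivAt.sub
      ((hasStrictDerivAt_const_rpow (by norm_num) p).hasDerivAt.const_mul 4)
  -- The derivative `2 ^ p * ((3 / 2) ^ p * log 3 - 4 * log 2)` is nonpositive for `p ≤ 2`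
  -- because `(3 / 2) ^ p ≤ 9 / 4` and `3 ^ 9 ≤ 2 ^ 16`.
  have hlog : 9 / 4 * log 3 ≤ 4 * log 2 := by
    have h := log_le_log (by norm_num) (by norm_num : (3 : ℝ) ^ 9 ≤ 2 ^ 16)
    rw [log_pow, log_pow] at h
    push_cast at h
    linarith
  have hanti : AntitoneOn (fun p : ℝ ↦ (3 : ℝ) ^ p - 4 * 2 ^ p) (Icc 1 2) := by
    refine antitoneOn_of_hasDerivWithinAt_nonpos (convex_Icc 1 2)
      (continuous_iff_continuousAt.2 fun p ↦ (hderiv p).continuousAt).continuousOn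
      (fun p _ ↦ (hderiv p).hasDerivWithinAt) fun p hp ↦ ?_
    rw [interior_Icc] at hp
    have hsplit : (3 : ℝ) ^ p = (3 / 2) ^ p * 2 ^ p := by
      rw [← mul_rpow (by norm_num) (by norm_num)]
      norm_num
    have hle : ((3 : ℝ) / 2) ^ p ≤ 9 / 4 := by
      calc ((3 : ℝ) / 2) ^ p ≤ (3 / 2) ^ (2 : ℝ) :=
            rpow_le_rpow_of_exponent_le (by norm_num) hp.2.le
        _ = 9 / 4 := by norm_num
    have hp' : ((3 : ℝ) / 2) ^ p * log 3 ≤ 4 * log 2 :=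
      (mul_le_mul_of_nonneg_right hle (log_nonneg (by norm_num))).trans hlog
    have h2 : 0 ≤ (2 : ℝ) ^ p := rpow_nonneg (by norm_num) p
    rw [hsplit]
    nlinarith [mul_le_mul_of_nonneg_left hp' h2]
  have h := hanti ⟨hq₁, hq₂⟩ ⟨by norm_num, le_rfl⟩ hq₂
  norm_num at h
  linarith

end SecondDifference

section RieszCoefficients

variable {ν : ℝ}

lemma aCoef_self (j : ℕ) : aCoef ν j j = 1 := if_pos rfl

lemma aCoef_eq_secondDiff {j m : ℕ} (hm : 1 ≤ m) (hmj : m < j) :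
    aCoef ν j m = secondDiff (· ^ (3 - ν)) ((j : ℝ) - m) := by
  rw [aCoef, if_neg hmj.ne, if_neg (by omega)]
  rfl

lemma sum_aCoef_Icc (hν : ν ≤ 2) {j : ℕ} (hj : 1 ≤ j) :
    ∑ m ∈ Finset.Icc 1 j, aCoef ν j m = (j : ℝ) ^ (3 - ν) - ((j : ℝ) - 1) ^ (3 - ν) := by
  obtain ⟨n, rfl⟩ : ∃ n, j = n + 1 := ⟨j - 1, by omega⟩
  have hD : ∀ m ∈ Finset.Icc 1 n,
      aCoef ν (n + 1) m = secondDiff (· ^ (3 - ν)) ((n + 1 - m : ℕ) : ℝ) := by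
    intro m hm
    rw [Finset.mem_Icc] at hm
    rw [aCoef_eq_secondDiff hm.1 (by omega), Nat.cast_sub (by omega)]
  rw [Finset.sum_Icc_succ_top (by omega), aCoef_self, Finset.sum_congr rfl hD,
    sum_Icc_one_reflect (fun r ↦ secondDiff (· ^ (3 - ν)) (r : ℝ)),
    sum_secondDiff_rpow_Icc (by linarith)]
  push_cast
  rw [add_sub_cancel_right]
  ring

lemma pCoef_succ (i : ℕ) : pCoef ν i (i + 1) = 1 := by
  rw [pCoef, if_neg (by omega), if_neg (by omega), if_pos rfl, aCoef_self]

lemma pCoef_of_succ_lt {i m : ℕ} (h : i + 1 < m) : pCoef ν i m = 0 := by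
  rw [pCoef, if_neg (by omega), if_neg (by omega), if_neg (by omega)]

lemma pCoef_self (hν : ν ≤ 2) {i : ℕ} (hi : 1 ≤ i) : pCoef ν i i = 2 ^ (3 - ν) - 4 := by
  rw [pCoef, if_neg (lt_irrefl i), if_pos rfl, aCoef_self, aCoef_eq_secondDiff hi (by omega)]
  push_cast
  rw [add_sub_cancel_left, secondDiff_rpow_one (by linarith)]
  ring

lemma pCoef_pred (hν : ν ≤ 2) {i : ℕ} (hi : 2 ≤ i) :
    pCoef ν i (i - 1) = 3 ^ (3 - ν) - 4 * 2 ^ (3 - ν) + 6 := by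
  rw [pCoef, if_pos (by omega), aCoef_self, aCoef_eq_secondDiff (by omega) (by omega),
    aCoef_eq_secondDiff (by omega) (by omega), Nat.cast_sub (by omega)]
  push_cast
  rw [show (i : ℝ) - (i - 1) = 1 by ring, show (i : ℝ) + 1 - (i - 1) = 2 by ring,
    secondDiff_rpow_one (by linarith), secondDiff_rpow_two]
  ring

lemma pCoef_eq_secondDiff_secondDiff {i m : ℕ} (hm : 1 ≤ m) (hmi : m + 2 ≤ i) :
    pCoef ν i m = secondDiff (secondDiff (· ^ (3 - ν))) ((i : ℝ) - m) := by
  rw [pCoef, if_pos (by omega), aCoef_eq_secondDiff hm (by omega),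
    aCoef_eq_secondDiff hm (by omega), aCoef_eq_secondDiff hm (by omega), Nat.cast_sub (by omega)]
  push_cast
  conv_rhs => rw [secondDiff]
  rw [show (i : ℝ) - 1 - m = i - m - 1 by ring, show (i : ℝ) + 1 - m = i - m + 1 by ring]
  ring

lemma pCoef_nonneg (hν₁ : 1 ≤ ν) (hν₂ : ν ≤ 2) {i m : ℕ} (hm : 1 ≤ m) (hmi : m + 2 ≤ i) :
    0 ≤ pCoef ν i m := by
  have : (m : ℝ) + 2 ≤ i := by exact_mod_cast hmi
  rw [pCoef_eq_secondDiff_secondDiff hm hmi]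
  exact (convexOn_secondDiff_rpow (by linarith) (by linarith)).secondDiff_nonneg
    (mem_Ici.2 (by linarith)) (mem_Ici.2 (by linarith))

lemma sum_pCoef_Icc_succ {i : ℕ} (hi : 1 ≤ i) :
    ∑ m ∈ Finset.Icc 1 (i + 1), pCoef ν i m
      = ∑ m ∈ Finset.Icc 1 (i - 1), aCoef ν (i - 1) m - 2 * ∑ m ∈ Finset.Icc 1 i, aCoef ν i m
        + ∑ m ∈ Finset.Icc 1 (i + 1), aCoef ν (i + 1) m := by
  obtain ⟨n, rfl⟩ : ∃ n, i = n + 1 := ⟨i - 1, by omega⟩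
  have hlow : ∀ m ∈ Finset.Icc 1 n, pCoef ν (n + 1) m
      = aCoef ν n m - 2 * aCoef ν (n + 1) m + aCoef ν (n + 1 + 1) m := by
    intro m hm
    rw [Finset.mem_Icc] at hm
    rw [pCoef, if_pos (by omega), Nat.add_sub_cancel]
  have hself : pCoef ν (n + 1) (n + 1)
      = -2 * aCoef ν (n + 1) (n + 1) + aCoef ν (n + 1 + 1) (n + 1) := by
    rw [pCoef, if_neg (lt_irrefl _), if_pos rfl]
  simp only [Finset.sum_Icc_succ_top (by omega : 1 ≤ n + 1),
    Finset.sum_Icc_succ_top (by omega : 1 ≤ n + 1 + 1), Nat.add_sub_cancel]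
  rw [Finset.sum_congr rfl hlow, hself, pCoef_succ, Finset.sum_add_distrib, Finset.sum_sub_distrib,
    ← Finset.mul_sum]
  simp only [aCoef_self]
  ring

lemma sum_pCoef_one (hν : ν ≤ 2) : ∑ m ∈ Finset.Icc 1 2, pCoef ν 1 m = 2 ^ (3 - ν) - 3 := by
  rw [Finset.sum_Icc_succ_top (by omega), Finset.Icc_self, Finset.sum_singleton,
    pCoef_self hν le_rfl, pCoef_succ]
  ring

lemma sum_pCoef_Icc_succ_nonpos (hν₁ : 1 ≤ ν) (hν₂ : ν ≤ 2) {i : ℕ} (hi : 2 ≤ i) :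
    ∑ m ∈ Finset.Icc 1 (i + 1), pCoef ν i m ≤ 0 := by
  have hi' : (2 : ℝ) ≤ i := by exact_mod_cast hi
  have h := antitoneOn_secondDiff_rpow (q := 3 - ν) (by linarith) (by linarith)
    (mem_Ici.2 (by linarith : (1 : ℝ) ≤ i - 1)) (mem_Ici.2 (by linarith : (1 : ℝ) ≤ i))
    (by linarith)
  rw [sum_pCoef_Icc_succ (by omega), sum_aCoef_Icc hν₂ (by omega), sum_aCoef_Icc hν₂ (by omega),
    sum_aCoef_Icc hν₂ (by omega), Nat.cast_sub (by omega)]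
  unfold secondDiff at h
  push_cast
  simp only [sub_add_cancel, add_sub_cancel_right] at h ⊢
  linarith

lemma sum_pCoef_Icc_pred {N i : ℕ} (hi : 1 ≤ i) (hiN : i ≤ N - 1) :
    ∑ m ∈ Finset.Icc 1 (N - 1), pCoef ν i m
      = ∑ m ∈ Finset.Icc 1 (i + 1), pCoef ν i m - if i = N - 1 then 1 else 0 := by
  split_ifs with h
  · rw [← h, Finset.sum_Icc_succ_top (by omega), pCoef_succ]
    ring
  · rw [sub_zero]
    refine (Finset.sum_subset (Finset.Icc_subset_Icc_right (by omega)) fun m hm hm' ↦ ?_).symm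
    rw [Finset.mem_Icc] at hm hm'
    exact pCoef_of_succ_lt (by omega)

lemma sum_pCoef_Icc_pred_le (hν₁ : 1 ≤ ν) (hν₂ : ν ≤ 2) {N i : ℕ} (hi : 1 ≤ i)
    (hiN : i ≤ N - 1) :
    ∑ m ∈ Finset.Icc 1 (N - 1), pCoef ν i m
      ≤ (if i = 1 then 2 ^ (3 - ν) - 3 else 0) - if i = N - 1 then 1 else 0 := by
  rw [sum_pCoef_Icc_pred hi hiN]
  gcongr
  split_ifs with h
  · rw [h, sum_pCoef_one hν₂]
  · exact sum_pCoef_Icc_succ_nonpos hν₁ hν₂ (by omega)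

lemma bCoef_eq_aCoef {N j m : ℕ} (hj : j ≤ N) (hm : m ≤ N) :
    bCoef ν N j m = aCoef ν (N - j) (N - m) := by
  rw [bCoef, aCoef]
  by_cases hmj : m = j
  · rw [if_pos hmj, if_pos (by omega)]
  rw [if_neg hmj, if_neg (show ¬N - m = N - j by omega), Nat.cast_sub hj]
  by_cases hmN : m = N
  · rw [if_pos hmN, if_pos (by omega)]
    ring
  · rw [if_neg hmN, if_neg (by omega), Nat.cast_sub hm]
    ring_nf

lemma qCoef_eq_pCoef {N i m : ℕ} (hi : 1 ≤ i) (hiN : i ≤ N - 1) (hm : m ≤ N) :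
    qCoef ν N i m = pCoef ν (N - i) (N - m) := by
  rw [qCoef, pCoef]
  by_cases h₁ : m + 1 < i
  · rw [if_pos h₁, if_neg (by omega), if_neg (by omega), if_neg (by omega)]
  rw [if_neg h₁]
  by_cases h₂ : m + 1 = i
  · rw [if_pos h₂, if_neg (by omega), if_neg (by omega), if_pos (by omega), aCoef_self, bCoef,
      if_pos rfl]
  rw [if_neg h₂]
  by_cases h₃ : m = i
  · rw [if_pos h₃, if_neg (by omega), if_pos (by omega), bCoef_eq_aCoef (by omega) (by omega),
      bCoef_eq_aCoef (by omega) (by omega), show N - (i - 1) = N - i + 1 by omega]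
  · rw [if_neg h₃, if_pos (by omega), bCoef_eq_aCoef (by omega) hm, bCoef_eq_aCoef (by omega) hm,
      bCoef_eq_aCoef (by omega) hm, show N - (i - 1) = N - i + 1 by omega,
      show N - (i + 1) = N - i - 1 by omega]
    ring

lemma sum_qCoef_Icc {N i : ℕ} (hi : 1 ≤ i) (hiN : i ≤ N - 1) :
    ∑ m ∈ Finset.Icc 1 (N - 1), qCoef ν N i m = ∑ m ∈ Finset.Icc 1 (N - 1), pCoef ν (N - i) m := by
  rw [← sum_Icc_one_reflect (pCoef ν (N - i))]
  refine Finset.sum_congr rfl fun m hm ↦ ?_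
  rw [Finset.mem_Icc] at hm
  rw [qCoef_eq_pCoef hi hiN (by omega), show N - 1 + 1 - m = N - m by omega]

lemma two_rpow_three_sub_le_four (hν : 1 ≤ ν) : (2 : ℝ) ^ (3 - ν) ≤ 4 :=
  calc (2 : ℝ) ^ (3 - ν) ≤ 2 ^ (2 : ℝ) := rpow_le_rpow_of_exponent_le (by norm_num) (by linarith)
    _ = 4 := by norm_num

lemma pCoef_pred_add_one_nonneg (hν₁ : 1 ≤ ν) (hν₂ : ν ≤ 2) {i : ℕ} (hi : 2 ≤ i) :
    0 ≤ pCoef ν i (i - 1) + 1 := by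
  rw [pCoef_pred hν₂ hi]
  linarith [three_rpow_sub_four_mul_two_rpow_add_seven_nonneg (q := 3 - ν) (by linarith)
    (by linarith)]

lemma gCoef_self_nonpos (hν₁ : 1 ≤ ν) (hν₂ : ν ≤ 2) {N i : ℕ} (hi : 1 ≤ i) (hiN : i ≤ N - 1) :
    gCoef ν N i i ≤ 0 := by
  rw [gCoef, pCoef_self hν₂ hi, qCoef_eq_pCoef hi hiN (by omega), pCoef_self hν₂ (by omega)]
  linarith [two_rpow_three_sub_le_four hν₁]

lemma gCoef_nonneg (hν₁ : 1 ≤ ν) (hν₂ : ν ≤ 2) {N i m : ℕ} (hi : 1 ≤ i) (hiN : i ≤ N - 1)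
    (hm : 1 ≤ m) (hmN : m ≤ N - 1) (hmi : m ≠ i) : 0 ≤ gCoef ν N i m := by
  rw [gCoef]
  rcases (by omega : m + 2 ≤ i ∨ m + 1 = i ∨ m = i + 1 ∨ i + 2 ≤ m) with h | rfl | rfl | h
  · rw [qCoef, if_pos (by omega), add_zero]
    exact pCoef_nonneg hν₁ hν₂ hm h
  · rw [qCoef, if_neg (by omega), if_pos rfl, Nat.add_sub_cancel, bCoef, if_pos rfl]
    simpa using pCoef_pred_add_one_nonneg hν₁ hν₂ (i := m + 1) (by omega)
  · rw [pCoef_succ, qCoef_eq_pCoef hi hiN (by omega), show N - (i + 1) = N - i - 1 by omega]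
    linarith [pCoef_pred_add_one_nonneg hν₁ hν₂ (i := N - i) (by omega)]
  · rw [pCoef_of_succ_lt (by omega), qCoef_eq_pCoef hi hiN (by omega), zero_add]
    exact pCoef_nonneg hν₁ hν₂ (by omega) (by omega)

lemma sum_gCoef_Icc_nonpos (hν₁ : 1 ≤ ν) (hν₂ : ν ≤ 2) {N i : ℕ} (hi : 1 ≤ i) (hiN : i ≤ N - 1) :
    ∑ m ∈ Finset.Icc 1 (N - 1), gCoef ν N i m ≤ 0 := by
  have hp := sum_pCoef_Icc_pred_le hν₁ hν₂ hi hiN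
  have hq := sum_pCoef_Icc_pred_le hν₁ hν₂ (N := N) (i := N - i) (by omega) (by omega)
  have h4 := two_rpow_three_sub_le_four hν₁
  simp only [gCoef, Finset.sum_add_distrib, sum_qCoef_Icc hi hiN]
  split_ifs at hp hq <;> first | omega | linarith

lemma abs_sum_gCoef_mul_le (hν₁ : 1 ≤ ν) (hν₂ : ν ≤ 2) {N i : ℕ} (hi : 1 ≤ i) (hiN : i ≤ N - 1)
    {v : ℕ → ℝ} {M : ℝ} (hv₀ : v 0 = 0) (hvN : v N = 0) (hv : ∀ m ≤ N, |v m| ≤ M) :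
    |∑ m ∈ (Finset.range (N + 1)).erase i, gCoef ν N i m * v m| ≤ -gCoef ν N i i * M := by
  have hM : 0 ≤ M := (abs_nonneg _).trans (hv 0 (Nat.zero_le _))
  have hsub : (Finset.Icc 1 (N - 1)).erase i ⊆ (Finset.range (N + 1)).erase i := by
    intro m
    simp only [Finset.mem_erase, Finset.mem_Icc, Finset.mem_range]
    omega
  rw [← Finset.sum_subset hsub fun m hm hm' ↦ ?_]
  · have hrow : ∑ m ∈ (Finset.Icc 1 (N - 1)).erase i, gCoef ν N i m ≤ -gCoef ν N i i := by
      have := Finset.sum_erase_add _ (gCoef ν N i) (Finset.mem_Icc.2 ⟨hi, hiN⟩)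
      linarith [sum_gCoef_Icc_nonpos hν₁ hν₂ hi hiN]
    calc _ ≤ ∑ m ∈ (Finset.Icc 1 (N - 1)).erase i, gCoef ν N i m * M := by
          refine abs_sum_mul_le_sum_mul (fun m hm ↦ ?_) fun m hm ↦ hv m ?_
          all_goals simp only [Finset.mem_erase, Finset.mem_Icc] at hm
          · exact gCoef_nonneg hν₁ hν₂ hi hiN hm.2.1 hm.2.2 hm.1
          · omega
      _ = (∑ m ∈ (Finset.Icc 1 (N - 1)).erase i, gCoef ν N i m) * M := (Finset.sum_mul ..).symm
      _ ≤ -gCoef ν N i i * M := mul_le_mul_of_nonneg_right hrow hM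
  · simp only [Finset.mem_erase, Finset.mem_Icc, Finset.mem_range] at hm hm'
    obtain rfl | rfl : m = 0 ∨ m = N := by omega
    · rw [hv₀, mul_zero]
    · rw [hvN, mul_zero]

end RieszCoefficients

section maxAbs2

variable {Nx Ny : ℕ} (v : ℕ → ℕ → ℝ)

lemma abs_le_maxAbs2 {i j : ℕ} (hi : i ≤ Nx) (hj : j ≤ Ny) : |v i j| ≤ maxAbs2 Nx Ny v :=
  Finset.le_sup' (fun p : ℕ × ℕ ↦ |v p.1 p.2|) (b := (i, j))
    (Finset.mem_product.2 ⟨Finset.mem_range.2 (by omega), Finset.mem_range.2 (by omega)⟩)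

lemma maxAbs2_nonneg : 0 ≤ maxAbs2 Nx Ny v :=
  (abs_nonneg _).trans (abs_le_maxAbs2 v (Nat.zero_le Nx) (Nat.zero_le Ny))

lemma exists_maxAbs2_eq : ∃ i ≤ Nx, ∃ j ≤ Ny, maxAbs2 Nx Ny v = |v i j| := by
  obtain ⟨⟨i, j⟩, hij, h⟩ := Finset.exists_mem_eq_sup'
    (Finset.nonempty_range_add_one.product Finset.nonempty_range_add_one)
    fun p : ℕ × ℕ ↦ |v p.1 p.2|
  simp only [Finset.mem_product, Finset.mem_range] at hij
  exact ⟨i, by omega, j, by omega, h⟩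

variable {v} in
lemma maxAbs2_le {C : ℝ} (h : ∀ i ≤ Nx, ∀ j ≤ Ny, |v i j| ≤ C) : maxAbs2 Nx Ny v ≤ C :=
  Finset.sup'_le _ _ fun p hp ↦ by
    simp only [Finset.mem_product, Finset.mem_range] at hp
    exact h p.1 (by omega) p.2 (by omega)

end maxAbs2

lemma abs_le_of_implicit_step {x F S T a b p r : ℝ} (ha : 0 ≤ a) (hb : 0 ≤ b)
    (hS : |S| ≤ -p * |x|) (hT : |T| ≤ -r * |x|)
    (h : (1 - a * p - b * r) * x - a * S - b * T = F) : |x| ≤ |F| := by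
  have hx : (1 - a * p - b * r) * |x| ≤ |F| + a * |S| + b * |T| :=
    calc (1 - a * p - b * r) * |x| ≤ |(1 - a * p - b * r) * x| := by
          rw [abs_mul]
          exact mul_le_mul_of_nonneg_right (le_abs_self _) (abs_nonneg _)
      _ = |F + a * S + b * T| := by rw [← h]; ring_nf
      _ ≤ |F| + a * |S| + b * |T| := by
          simpa only [abs_mul, abs_of_nonneg ha, abs_of_nonneg hb] using
            abs_add_three F (a * S) (b * T)
  nlinarith [mul_le_mul_of_nonneg_left hS ha, mul_le_mul_of_nonneg_left hT hb]

theorem maxAbs2_le_of_implicit_riesz {α β : ℝ} (hα₁ : 1 ≤ α) (hα₂ : α ≤ 2) (hβ₁ : 1 ≤ β)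
    (hβ₂ : β ≤ 2) {Nx Ny : ℕ} {e a b F : ℕ → ℕ → ℝ} {B : ℝ} (hB : 0 ≤ B)
    (hbd : ∀ i j, i ≤ Nx → j ≤ Ny → (i = 0 ∨ i = Nx ∨ j = 0 ∨ j = Ny) → e i j = 0)
    (hab : ∀ i j, 1 ≤ i → i ≤ Nx - 1 → 1 ≤ j → j ≤ Ny - 1 → 0 ≤ a i j ∧ 0 ≤ b i j)
    (hF : ∀ i j, 1 ≤ i → i ≤ Nx - 1 → 1 ≤ j → j ≤ Ny - 1 → |F i j| ≤ B)
    (he : ∀ i j, 1 ≤ i → i ≤ Nx - 1 → 1 ≤ j → j ≤ Ny - 1 →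
      (1 - a i j * gCoef α Nx i i - b i j * gCoef β Ny j j) * e i j
        - a i j * ∑ m ∈ (Finset.range (Nx + 1)).erase i, gCoef α Nx i m * e m j
        - b i j * ∑ m ∈ (Finset.range (Ny + 1)).erase j, gCoef β Ny j m * e i m = F i j) :
    maxAbs2 Nx Ny e ≤ B := by
  obtain ⟨i, hi, j, hj, hmax⟩ := exists_maxAbs2_eq e
  by_cases hij : i = 0 ∨ i = Nx ∨ j = 0 ∨ j = Ny
  · rwa [hmax, hbd i j hi hj hij, abs_zero]
  have hi₁ : 1 ≤ i := by omega
  have hi₂ : i ≤ Nx - 1 := by omega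
  have hj₁ : 1 ≤ j := by omega
  have hj₂ : j ≤ Ny - 1 := by omega
  obtain ⟨ha, hb⟩ := hab i j hi₁ hi₂ hj₁ hj₂
  rw [hmax]
  refine (abs_le_of_implicit_step ha hb ?_ ?_ (he i j hi₁ hi₂ hj₁ hj₂)).trans
    (hF i j hi₁ hi₂ hj₁ hj₂)
    <;> rw [← hmax]
  · exact abs_sum_gCoef_mul_le hα₁ hα₂ hi₁ hi₂ (hbd 0 j (Nat.zero_le _) hj (by omega))
      (hbd Nx j le_rfl hj (by omega)) fun m hm ↦ abs_le_maxAbs2 e hm hj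
  · exact abs_sum_gCoef_mul_le hβ₁ hβ₂ hj₁ hj₂ (hbd i 0 hi (Nat.zero_le _) (by omega))
      (hbd i Ny hi le_rfl (by omega)) fun m hm ↦ abs_le_maxAbs2 e hi hm

theorem le_div_of_l1_recurrence {l E : ℕ → ℝ} {B : ℝ} {n : ℕ} (hl : Antitone l)
    (hl_pos : ∀ s, 0 < l s) (hl₀ : l 0 = 1) (hB : 0 ≤ B)
    (hE : ∀ k, k + 1 ≤ n → E (k + 1) ≤ ∑ s ∈ Finset.range k, (l s - l (s + 1)) * E (k - s) + B) :
    ∀ k, k + 1 ≤ n → E (k + 1) ≤ B / l k := by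
  intro k
  induction k using Nat.strong_induction_on with
  | _ k ih =>
    intro hk
    have hterm : ∀ s ∈ Finset.range k,
        (l s - l (s + 1)) * E (k - s) ≤ (l s - l (s + 1)) * (B / l k) := by
      intro s hs
      rw [Finset.mem_range] at hs
      have hE' : E (k - s) ≤ B / l (k - s - 1) := by
        simpa [show k - s - 1 + 1 = k - s by omega] using ih (k - s - 1) (by omega) (by omega)
      exact mul_le_mul_of_nonneg_left
        (hE'.trans (div_le_div_of_nonneg_left hB (hl_pos k) (hl (by omega))))
        (sub_nonneg.2 (hl (Nat.le_succ s)))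
    calc E (k + 1) ≤ ∑ s ∈ Finset.range k, (l s - l (s + 1)) * E (k - s) + B := hE k hk
      _ ≤ ∑ s ∈ Finset.range k, (l s - l (s + 1)) * (B / l k) + B :=
          add_le_add_left (Finset.sum_le_sum hterm) B
      _ = B / l k := by
          rw [← Finset.sum_mul, Finset.sum_range_sub', hl₀]
          field_simp [(hl_pos k).ne']
          ring

section lCoef

variable {γ : ℝ}

lemma lCoef_pos (hγ : γ < 1) (s : ℕ) : 0 < lCoef γ s :=
  sub_pos.2 (rpow_lt_rpow (Nat.cast_nonneg s) (lt_add_one _) (by linarith))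

lemma lCoef_zero (hγ : γ < 1) : lCoef γ 0 = 1 := by
  simp [lCoef, zero_rpow (by linarith : 1 - γ ≠ 0)]

lemma lCoef_antitone (hγ₀ : 0 ≤ γ) (hγ₁ : γ ≤ 1) : Antitone (lCoef γ) :=
  antitone_nat_of_succ_le fun s ↦ by
    have h := (concaveOn_rpow (p := 1 - γ) (by linarith) (by linarith)).secondDiff_nonpos
      (x := s + 1) (mem_Ici.2 (by simp)) (mem_Ici.2 (by positivity))
    simp only [secondDiff, add_sub_cancel_right] at h
    simp only [lCoef]
    push_cast
    linarith

lemma one_sub_le_rpow_mul_lCoef (hγ₀ : 0 ≤ γ) (hγ₁ : γ < 1) {k : ℕ} (hk : 1 ≤ k) :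
    1 - γ ≤ (k : ℝ) ^ γ * lCoef γ (k - 1) := by
  have hk' : (1 : ℝ) ≤ k := by exact_mod_cast hk
  have hamgm : (k : ℝ) ^ γ * ((k : ℝ) - 1) ^ (1 - γ) ≤ γ * k + (1 - γ) * (k - 1) :=
    geom_mean_le_arith_mean2_weighted hγ₀ (by linarith) (by linarith) (by linarith) (by ring)
  have hprod : (k : ℝ) ^ γ * (k : ℝ) ^ (1 - γ) = k := by
    rw [← rpow_add (by linarith), add_sub_cancel, rpow_one]
  rw [lCoef, Nat.cast_sub hk, Nat.cast_one, sub_add_cancel, mul_sub, hprod]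
  linarith

lemma div_lCoef_le (hγ₀ : 0 ≤ γ) (hγ₁ : γ < 1) {B : ℝ} (hB : 0 ≤ B) {k : ℕ} (hk : 1 ≤ k) :
    B / lCoef γ (k - 1) ≤ (k : ℝ) ^ γ / (1 - γ) * B := by
  rw [div_le_iff₀ (lCoef_pos hγ₁ _),
    show (k : ℝ) ^ γ / (1 - γ) * B * lCoef γ (k - 1) = B * ((k : ℝ) ^ γ * lCoef γ (k - 1)) / (1 - γ)
      by ring, le_div_iff₀ (by linarith)]
  exact mul_le_mul_of_nonneg_left (one_sub_le_rpow_mul_lCoef hγ₀ hγ₁ hk) hB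

end lCoef

lemma kappa_neg {ν : ℝ} (hν₁ : 1 < ν) (hν₂ : ν < 3) : kappa ν < 0 := by
  have hcos : cos (ν * π / 2) < 0 :=
    cos_neg_of_pi_div_two_lt_of_lt (by nlinarith [pi_pos]) (by nlinarith [pi_pos])
  rw [kappa]
  exact div_neg_of_pos_of_neg one_pos (by linarith)

lemma implicit_weight_nonneg {γ ν τ h c : ℝ} (hγ : γ < 2) (hν₁ : 1 < ν) (hν₂ : ν < 3)
    (hτ : 0 ≤ τ) (hh : 0 ≤ h) (hc : 0 ≤ c) :
    0 ≤ -(Gamma (2 - γ) * τ ^ γ * kappa ν * c) / (Gamma (4 - ν) * h ^ ν) := by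
  have hΓ₁ := Gamma_pos_of_pos (by linarith : 0 < 2 - γ)
  have hΓ₂ := Gamma_pos_of_pos (by linarith : 0 < 4 - ν)
  refine div_nonneg (neg_nonneg.2 (mul_nonpos_of_nonpos_of_nonneg ?_ hc)) (by positivity)
  exact mul_nonpos_of_nonneg_of_nonpos (by positivity) (kappa_neg hν₁ hν₂).le

theorem maxAbs2_le_div_lCoef_of_implicit_riesz {γ α β : ℝ} (hγ₀ : 0 ≤ γ) (hγ₁ : γ < 1)
    (hα₁ : 1 ≤ α) (hα₂ : α ≤ 2) (hβ₁ : 1 ≤ β) (hβ₂ : β ≤ 2) {Nx Ny Nt : ℕ}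
    {ω' ω'' R ε : ℕ → ℕ → ℕ → ℝ} {Rmax : ℝ} (hRmax : 0 ≤ Rmax)
    (hω : ∀ i j k : ℕ, 1 ≤ i → i ≤ Nx - 1 → 1 ≤ j → j ≤ Ny - 1 → 1 ≤ k → k ≤ Nt →
      0 ≤ ω' i j k ∧ 0 ≤ ω'' i j k)
    (hR : ∀ i j k : ℕ, 1 ≤ i → i ≤ Nx - 1 → 1 ≤ j → j ≤ Ny - 1 → 1 ≤ k → k ≤ Nt →
      |R k i j| ≤ Rmax)
    (hbc : ∀ k i j : ℕ, 1 ≤ k → k ≤ Nt → i ≤ Nx → j ≤ Ny →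
      (i = 0 ∨ i = Nx ∨ j = 0 ∨ j = Ny) → ε k i j = 0)
    (hscheme : ∀ i j k : ℕ, 1 ≤ i → i ≤ Nx - 1 → 1 ≤ j → j ≤ Ny - 1 → k + 1 ≤ Nt →
      (1 - ω' i j (k + 1) * gCoef α Nx i i - ω'' i j (k + 1) * gCoef β Ny j j)
          * ε (k + 1) i j
        - ω' i j (k + 1)
          * ∑ m ∈ (Finset.range (Nx + 1)).erase i, gCoef α Nx i m * ε (k + 1) m j
        - ω'' i j (k + 1)
          * ∑ m ∈ (Finset.range (Ny + 1)).erase j, gCoef β Ny j m * ε (k + 1) i m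
      = (∑ s ∈ Finset.range k, (lCoef γ s - lCoef γ (s + 1)) * ε (k - s) i j)
        + R (k + 1) i j)
    (k : ℕ) (hk : k + 1 ≤ Nt) :
    maxAbs2 Nx Ny (ε (k + 1)) ≤ Rmax / lCoef γ k := by
  have hl := lCoef_antitone hγ₀ hγ₁.le
  refine le_div_of_l1_recurrence (E := fun k ↦ maxAbs2 Nx Ny (ε k)) hl (lCoef_pos hγ₁)
    (lCoef_zero hγ₁) hRmax (fun k hk ↦ ?_) k hk
  have hw : ∀ s ∈ Finset.range k, 0 ≤ lCoef γ s - lCoef γ (s + 1) :=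
    fun s _ ↦ sub_nonneg.2 (hl (Nat.le_succ s))
  refine maxAbs2_le_of_implicit_riesz hα₁ hα₂ hβ₁ hβ₂
    (add_nonneg (Finset.sum_nonneg fun s hs ↦ mul_nonneg (hw s hs) (maxAbs2_nonneg _)) hRmax)
    (fun i j hi hj ↦ hbc (k + 1) i j (by omega) hk hi hj)
    (fun i j hi₁ hi₂ hj₁ hj₂ ↦ hω i j (k + 1) hi₁ hi₂ hj₁ hj₂ (by omega) hk)
    (fun i j hi₁ hi₂ hj₁ hj₂ ↦ ?_) fun i j hi₁ hi₂ hj₁ hj₂ ↦ hscheme i j k hi₁ hi₂ hj₁ hj₂ hk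
  exact (abs_add_le _ _).trans (add_le_add
    (abs_sum_mul_le_sum_mul hw fun s _ ↦ abs_le_maxAbs2 _ (by omega) (by omega))
    (hR i j (k + 1) hi₁ hi₂ hj₁ hj₂ (by omega) hk))

lemma rpow_div_one_sub_mul_le {γ τ T C X Rmax : ℝ} {k N : ℕ} (hγ₀ : 0 ≤ γ) (hγ₁ : γ < 1)
    (hτ : 0 ≤ τ) (hC : 0 ≤ C) (hX : 0 ≤ X) (hk : k ≤ N) (hT : N * τ ≤ T)
    (hR : Rmax ≤ C * τ ^ γ * X) :
    (k : ℝ) ^ γ / (1 - γ) * Rmax ≤ C * T ^ γ / (1 - γ) * X := by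
  have h1γ : 0 < 1 - γ := by linarith
  have hkτ : (k : ℝ) ^ γ * τ ^ γ ≤ T ^ γ := by
    rw [← mul_rpow (Nat.cast_nonneg k) hτ]
    refine rpow_le_rpow (by positivity) (le_trans ?_ hT) hγ₀
    exact mul_le_mul_of_nonneg_right (by exact_mod_cast hk) hτ
  calc (k : ℝ) ^ γ / (1 - γ) * Rmax ≤ (k : ℝ) ^ γ / (1 - γ) * (C * τ ^ γ * X) := by gcongr
    _ = C * ((k : ℝ) ^ γ * τ ^ γ) / (1 - γ) * X := by ring
    _ ≤ C * T ^ γ / (1 - γ) * X := by gcongr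

theorem implicit_2d_convergence_general (γ α β : ℝ) (hγ : γ ∈ Set.Ioo (0:ℝ) 1)
    (hα : α ∈ Set.Ioc (1:ℝ) 2) (hβ : β ∈ Set.Ioc (1:ℝ) 2)
    (Nx Ny Nt : ℕ)
    (τ Δx Δy : ℝ) (hτ : 0 < τ) (hΔx : 0 < Δx) (hΔy : 0 < Δy)
    (c d : ℕ → ℕ → ℕ → ℝ)
    (hcd : ∀ i j k : ℕ, 1 ≤ i → i ≤ Nx - 1 → 1 ≤ j → j ≤ Ny - 1 → 1 ≤ k → k ≤ Nt →
      0 ≤ c i j k ∧ 0 ≤ d i j k)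
    (ω' ω'' : ℕ → ℕ → ℕ → ℝ)
    (hω : ∀ i j k : ℕ, 1 ≤ i → i ≤ Nx - 1 → 1 ≤ j → j ≤ Ny - 1 → 1 ≤ k → k ≤ Nt →
      ω' i j k = -(Real.Gamma (2 - γ) * τ ^ γ * kappa α * c i j k)
          / (Real.Gamma (4 - α) * Δx ^ α) ∧
      ω'' i j k = -(Real.Gamma (2 - γ) * τ ^ γ * kappa β * d i j k)
          / (Real.Gamma (4 - β) * Δy ^ β))
    (R : ℕ → ℕ → ℕ → ℝ) (Rmax : ℝ)
    (hRmax : IsGreatest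
      {x : ℝ | ∃ i j k : ℕ, 1 ≤ i ∧ i ≤ Nx - 1 ∧ 1 ≤ j ∧ j ≤ Ny - 1 ∧ 1 ≤ k ∧ k ≤ Nt ∧
        x = |R k i j|} Rmax)
    (ε : ℕ → ℕ → ℕ → ℝ)
    (hinit : ∀ i j : ℕ, i ≤ Nx → j ≤ Ny → ε 0 i j = 0)
    (hbc : ∀ k i j : ℕ, 1 ≤ k → k ≤ Nt → i ≤ Nx → j ≤ Ny →
      (i = 0 ∨ i = Nx ∨ j = 0 ∨ j = Ny) → ε k i j = 0)
    (hscheme : ∀ i j k : ℕ, 1 ≤ i → i ≤ Nx - 1 → 1 ≤ j → j ≤ Ny - 1 → k + 1 ≤ Nt →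
      (1 - ω' i j (k + 1) * gCoef α Nx i i - ω'' i j (k + 1) * gCoef β Ny j j)
          * ε (k + 1) i j
        - ω' i j (k + 1)
          * ∑ m ∈ (Finset.range (Nx + 1)).erase i, gCoef α Nx i m * ε (k + 1) m j
        - ω'' i j (k + 1)
          * ∑ m ∈ (Finset.range (Ny + 1)).erase j, gCoef β Ny j m * ε (k + 1) i m
      = (∑ s ∈ Finset.range k, (lCoef γ s - lCoef γ (s + 1)) * ε (k - s) i j)
        + R (k + 1) i j) :
    (∀ k : ℕ, 1 ≤ k → k ≤ Nt →
      maxAbs2 Nx Ny (ε k) ≤ Rmax / lCoef γ (k - 1) ∧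
      Rmax / lCoef γ (k - 1) ≤ (k : ℝ) ^ γ / (1 - γ) * Rmax) ∧
    (∀ T C : ℝ, 0 < T → (Nt : ℝ) * τ ≤ T → 0 < C →
      (∀ i j k : ℕ, 1 ≤ i → i ≤ Nx - 1 → 1 ≤ j → j ≤ Ny - 1 → 1 ≤ k → k ≤ Nt →
        |R k i j| ≤ C * τ ^ γ * (τ ^ (2 - γ) + Δx ^ 2 + Δy ^ 2)) →
      ∀ k : ℕ, k ≤ Nt →
        maxAbs2 Nx Ny (ε k) ≤ C * T ^ γ / (1 - γ) * (τ ^ (2 - γ) + Δx ^ 2 + Δy ^ 2)) := by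
  obtain ⟨hγ₀, hγ₁⟩ := hγ
  obtain ⟨⟨i₀, j₀, k₀, hi₀, hi₀', hj₀, hj₀', hk₀, hk₀', hR₀⟩, hRmax⟩ := hRmax
  have hRmax₀ : 0 ≤ Rmax := hR₀ ▸ abs_nonneg _
  have hω₀ (i j k : ℕ) (hi₁ : 1 ≤ i) (hi₂ : i ≤ Nx - 1) (hj₁ : 1 ≤ j) (hj₂ : j ≤ Ny - 1)
      (hk₁ : 1 ≤ k) (hk₂ : k ≤ Nt) : 0 ≤ ω' i j k ∧ 0 ≤ ω'' i j k := by
    obtain ⟨hc, hd⟩ := hcd i j k hi₁ hi₂ hj₁ hj₂ hk₁ hk₂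
    obtain ⟨hω', hω''⟩ := hω i j k hi₁ hi₂ hj₁ hj₂ hk₁ hk₂
    rw [hω', hω'']
    exact ⟨implicit_weight_nonneg (by linarith) hα.1 (by linarith [hα.2]) hτ.le hΔx.le hc,
      implicit_weight_nonneg (by linarith) hβ.1 (by linarith [hβ.2]) hτ.le hΔy.le hd⟩
  have hbound (k : ℕ) (hk₁ : 1 ≤ k) (hk : k ≤ Nt) :
      maxAbs2 Nx Ny (ε k) ≤ Rmax / lCoef γ (k - 1) ∧
        Rmax / lCoef γ (k - 1) ≤ (k : ℝ) ^ γ / (1 - γ) * Rmax := by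
    obtain ⟨k, rfl⟩ : ∃ k', k = k' + 1 := ⟨k - 1, by omega⟩
    exact ⟨maxAbs2_le_div_lCoef_of_implicit_riesz hγ₀.le hγ₁ hα.1.le hα.2 hβ.1.le hβ.2 hRmax₀ hω₀
      (fun i j k h₁ h₂ h₃ h₄ h₅ h₆ ↦ hRmax ⟨i, j, k, h₁, h₂, h₃, h₄, h₅, h₆, rfl⟩) hbc hscheme k hk,
      div_lCoef_le hγ₀.le hγ₁ hRmax₀ hk₁⟩
  refine ⟨hbound, fun T C hT hNtτ hC hR k hk ↦ ?_⟩
  rcases Nat.eq_zero_or_pos k with rfl | hk₁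
  · have h1γ : 0 < 1 - γ := by linarith
    exact maxAbs2_le fun i hi j hj ↦ by rw [hinit i j hi hj, abs_zero]; positivity
  exact (hbound k hk₁ hk).1.trans <| (hbound k hk₁ hk).2.trans <|
    rpow_div_one_sub_mul_le hγ₀.le hγ₁ hτ.le hC.le (by positivity) hk hNtτ
      (hR₀ ▸ hR i₀ j₀ k₀ hi₀ hi₀' hj₀ hj₀' hk₀ hk₀')

/-- Theorem 4.3 (case `0 < γ < 1`): convergence of the two-dimensional implicit scheme.
Here `ε k i j` is the error `u(x_i,y_j,t_k) - u^k_{i,j}` and `R k i j` the local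
truncation error, with `Rmax` the maximum of `|R^k_{i,j}|`. -/
theorem implicit_2d_convergence (γ α β : ℝ) (hγ : γ ∈ Set.Ioo (0:ℝ) 1)
    (hα : α ∈ Set.Ioc (1:ℝ) 2) (hβ : β ∈ Set.Ioc (1:ℝ) 2)
    (Nx Ny Nt : ℕ) (hNx : 2 ≤ Nx) (hNy : 2 ≤ Ny) (hNt : 1 ≤ Nt)
    (τ Δx Δy : ℝ) (hτ : 0 < τ) (hΔx : 0 < Δx) (hΔy : 0 < Δy)
    (c d : ℕ → ℕ → ℕ → ℝ)
    (hcd : ∀ i j k : ℕ, 1 ≤ i → i ≤ Nx - 1 → 1 ≤ j → j ≤ Ny - 1 → 1 ≤ k → k ≤ Nt →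
      0 ≤ c i j k ∧ 0 ≤ d i j k)
    (ω' ω'' : ℕ → ℕ → ℕ → ℝ)
    (hω : ∀ i j k : ℕ, 1 ≤ i → i ≤ Nx - 1 → 1 ≤ j → j ≤ Ny - 1 → 1 ≤ k → k ≤ Nt →
      ω' i j k = -(Real.Gamma (2 - γ) * τ ^ γ * kappa α * c i j k)
          / (Real.Gamma (4 - α) * Δx ^ α) ∧
      ω'' i j k = -(Real.Gamma (2 - γ) * τ ^ γ * kappa β * d i j k)
          / (Real.Gamma (4 - β) * Δy ^ β))
    (R : ℕ → ℕ → ℕ → ℝ) (Rmax : ℝ)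
    (hRmax : IsGreatest
      {x : ℝ | ∃ i j k : ℕ, 1 ≤ i ∧ i ≤ Nx - 1 ∧ 1 ≤ j ∧ j ≤ Ny - 1 ∧ 1 ≤ k ∧ k ≤ Nt ∧
        x = |R k i j|} Rmax)
    (ε : ℕ → ℕ → ℕ → ℝ)
    (hinit : ∀ i j : ℕ, i ≤ Nx → j ≤ Ny → ε 0 i j = 0)
    (hbc : ∀ k i j : ℕ, 1 ≤ k → k ≤ Nt → i ≤ Nx → j ≤ Ny →
      (i = 0 ∨ i = Nx ∨ j = 0 ∨ j = Ny) → ε k i j = 0)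
    (hscheme : ∀ i j k : ℕ, 1 ≤ i → i ≤ Nx - 1 → 1 ≤ j → j ≤ Ny - 1 → k + 1 ≤ Nt →
      (1 - ω' i j (k + 1) * gCoef α Nx i i - ω'' i j (k + 1) * gCoef β Ny j j)
          * ε (k + 1) i j
        - ω' i j (k + 1)
          * ∑ m ∈ (Finset.range (Nx + 1)).erase i, gCoef α Nx i m * ε (k + 1) m j
        - ω'' i j (k + 1)
          * ∑ m ∈ (Finset.range (Ny + 1)).erase j, gCoef β Ny j m * ε (k + 1) i m
      = (∑ s ∈ Finset.range k, (lCoef γ s - lCoef γ (s + 1)) * ε (k - s) i j)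
        + R (k + 1) i j) :
    (∀ k : ℕ, 1 ≤ k → k ≤ Nt →
      maxAbs2 Nx Ny (ε k) ≤ Rmax / lCoef γ (k - 1) ∧
      Rmax / lCoef γ (k - 1) ≤ (k : ℝ) ^ γ / (1 - γ) * Rmax) ∧
    (∀ T C : ℝ, 0 < T → (Nt : ℝ) * τ ≤ T → 0 < C →
      (∀ i j k : ℕ, 1 ≤ i → i ≤ Nx - 1 → 1 ≤ j → j ≤ Ny - 1 → 1 ≤ k → k ≤ Nt →
        |R k i j| ≤ C * τ ^ γ * (τ ^ (2 - γ) + Δx ^ 2 + Δy ^ 2)) →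
      ∀ k : ℕ, k ≤ Nt →
        maxAbs2 Nx Ny (ε k) ≤ C * T ^ γ / (1 - γ) * (τ ^ (2 - γ) + Δx ^ 2 + Δy ^ 2)) :=
  implicit_2d_convergence_general γ α β hγ hα hβ Nx Ny Nt τ Δx Δy hτ hΔx hΔy c d hcd ω' ω'' hω R
    Rmax hRmax ε hinit hbc hscheme
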